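/- arXiv:2501.14234 — 4 statements merged into one kernel-verified Lean document; each statement's English description precedes it below -/
import Mathlib

section
/- Let F_1, F_2, F_3, F_4 be nonnegative real numbers with F_1 + F_2 > 0 (hence also F_1 + F_2 + F_3 > 0). Setting β_1^R = F_3/(F_1+F_2+F_3), β_1^T = (F_1+F_2)/(F_1+F_2+F_3), β_2^R = F_2/(F_1+F_2) and β_2^T = F_1/(F_1+F_2), one has β_1^R + β_1^T = 1, β_2^R + β_2^T = 1, and (√(β_1^T · β_2^T · F_1) + √(β_1^T · β_2^R · F_2) + √(β_1^R · F_3))² + F_4 = F_1 + F_2 + F_3 + F_4, i.e., the splitting amplitudes of Eq. (16) of the paper attain the bound of Eq. (15) with equality. -/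
/-- Eq. (16): the splitting amplitudes proportional to the downstream path gains
attain the bound of Eq. (15) with equality. -/
theorem two_ris_splitting_attained (F₁ F₂ F₃ F₄ β₁R β₁T β₂R β₂T : ℝ)
    (hF₁ : 0 ≤ F₁) (hF₂ : 0 ≤ F₂) (hF₃ : 0 ≤ F₃) (hF₄ : 0 ≤ F₄)
    (hpos : 0 < F₁ + F₂)
    (hβ₁R : β₁R = F₃ / (F₁ + F₂ + F₃)) (hβ₁T : β₁T = (F₁ + F₂) / (F₁ + F₂ + F₃))
    (hβ₂R : β₂R = F₂ / (F₁ + F₂)) (hβ₂T : β₂T = F₁ / (F₁ + F₂)) :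
    β₁R + β₁T = 1 ∧ β₂R + β₂T = 1 ∧
    (Real.sqrt (β₁T * β₂T * F₁) + Real.sqrt (β₁T * β₂R * F₂) +
      Real.sqrt (β₁R * F₃)) ^ 2 + F₄ = F₁ + F₂ + F₃ + F₄ := by
  have hS : 0 < F₁ + F₂ + F₃ := by linarith
  refine ⟨by rw [hβ₁R, hβ₁T]; field_simp; ring, by rw [hβ₂R, hβ₂T]; field_simp; ring, ?_⟩
  have h1 : β₁T * β₂T * F₁ = F₁ ^ 2 / (F₁ + F₂ + F₃) := by
    rw [hβ₁T, hβ₂T]; field_simp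
  have h2 : β₁T * β₂R * F₂ = F₂ ^ 2 / (F₁ + F₂ + F₃) := by
    rw [hβ₁T, hβ₂R]; field_simp
  have h3 : β₁R * F₃ = F₃ ^ 2 / (F₁ + F₂ + F₃) := by
    rw [hβ₁R]; field_simp
  have hs : ∀ x : ℝ, 0 ≤ x → Real.sqrt (x ^ 2 / (F₁ + F₂ + F₃)) =
      x / Real.sqrt (F₁ + F₂ + F₃) := by
    intro x hx
    rw [Real.sqrt_div (sq_nonneg x), Real.sqrt_sq hx]
  have hsS : Real.sqrt (F₁ + F₂ + F₃) ≠ 0 := by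
    positivity
  rw [h1, h2, h3, hs _ hF₁, hs _ hF₂, hs _ hF₃, ← add_div, ← add_div,
    div_pow, Real.sq_sqrt hS.le, sq, mul_div_assoc, div_self hS.ne', mul_one]
end

section
/- For every weighted full binary tree T whose leaf values are all nonnegative and whose node weights are admissible (β_L, β_R ≥ 0 and β_L + β_R = 1 at every internal node), one has G(T)² ≤ leafSum(T). (This is the upper-bound direction of Proposition 1: the received signal power over a splitting tree of STAR-RISs never exceeds the sum of the maximum channel power gains of all its end-to-end paths.) -/
/-- A weighted full binary tree: a leaf carries the maximum end-to-end channel power gain of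
one beam-routing path; an internal node (a splitting STAR-RIS) carries its two
reflection/transmission amplitudes `βL`, `βR` and two subtrees. -/
inductive WTree : Type
  | leaf (F : ℝ) : WTree
  | node (βL βR : ℝ) (l r : WTree) : WTree

namespace WTree

/-- The sum of all leaf values (sum of maximum channel power gains of all paths). -/
def leafSum : WTree → ℝ
  | leaf F => F
  | node _ _ l r => leafSum l + leafSum r

/-- The amplitude `G(T)` of the coherently combined signal over the splitting tree. -/
noncomputable def G : WTree → ℝ
  | leaf F => Real.sqrt F
  | node βL βR l r => Real.sqrt βL * G l + Real.sqrt βR * G r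

/-- All leaf values are nonnegative. -/
def leavesNonneg : WTree → Prop
  | leaf F => 0 ≤ F
  | node _ _ l r => leavesNonneg l ∧ leavesNonneg r

/-- All leaf values are strictly positive. -/
def leavesPos : WTree → Prop
  | leaf F => 0 < F
  | node _ _ l r => leavesPos l ∧ leavesPos r

/-- A weight assignment is admissible if at every internal node `βL, βR ≥ 0` and
`βL + βR = 1`. -/
def admissible : WTree → Prop
  | leaf _ => True
  | node βL βR l r => 0 ≤ βL ∧ 0 ≤ βR ∧ βL + βR = 1 ∧ admissible l ∧ admissible r

end WTree

theorem sq_mul_add_mul_le_of_sq_add_sq_eq_one {a b : ℝ} (hab : a ^ 2 + b ^ 2 = 1) (x y : ℝ) :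
    (a * x + b * y) ^ 2 ≤ x ^ 2 + y ^ 2 := by
  nlinarith [sq_nonneg (a * y - b * x)]

/-- Upper-bound direction of Proposition 1: for any admissible weights, the received
signal power over a splitting tree of STAR-RISs never exceeds the sum of the maximum
channel power gains of all its end-to-end paths. -/
theorem tree_power_upper_bound (T : WTree)
    (hleaves : T.leavesNonneg) (hadm : T.admissible) :
    (T.G) ^ 2 ≤ T.leafSum := by
  induction T with
  | leaf F => exact (Real.sq_sqrt hleaves).le
  | node βL βR l r ihl ihr =>
    obtain ⟨hl, hr⟩ := hleaves
    obtain ⟨hβL, hβR, hsum, hal, har⟩ := hadm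
    have hweights : √βL ^ 2 + √βR ^ 2 = 1 := by
      rw [Real.sq_sqrt hβL, Real.sq_sqrt hβR, hsum]
    calc (√βL * l.G + √βR * r.G) ^ 2 ≤ l.G ^ 2 + r.G ^ 2 :=
          sq_mul_add_mul_le_of_sq_add_sq_eq_one hweights _ _
      _ ≤ l.leafSum + r.leafSum := add_le_add (ihl hl hal) (ihr hr har)
end

section
/- Let T be a weighted full binary tree whose leaf values are all strictly positive and whose node weights satisfy, at every internal node with subtrees l and r, β_L = leafSum(l)/(leafSum(l)+leafSum(r)) and β_R = leafSum(r)/(leafSum(l)+leafSum(r)). Then this weight assignment is admissible and G(T)² = leafSum(T). (This is the attainment direction of Proposition 1: the optimal STAR-RIS amplitude of Eq. (17), which splits power proportionally to the total downstream path gains, makes the received power equal to the sum of the maximum channel power gains of all selected paths.) -/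
namespace WTree

/-- The weights split power proportionally to the total downstream path gains
(Eq. (17) of the paper). -/
def proportionalWeights : WTree → Prop
  | leaf _ => True
  | node βL βR l r =>
      βL = leafSum l / (leafSum l + leafSum r) ∧
      βR = leafSum r / (leafSum l + leafSum r) ∧
      proportionalWeights l ∧ proportionalWeights r

end WTree

namespace WTree

lemma leafSum_pos : ∀ T : WTree, T.leavesPos → 0 < T.leafSum
  | leaf _, h => h
  | node _ _ l r, ⟨hl, hr⟩ => add_pos (leafSum_pos l hl) (leafSum_pos r hr)

lemma G_eq_sqrt : ∀ T : WTree, T.leavesPos → T.proportionalWeights →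
    T.G = Real.sqrt T.leafSum
  | leaf _, _, _ => rfl
  | node βL βR l r, ⟨hl, hr⟩, ⟨hβL, hβR, hpl, hpr⟩ => by
    have ha := (leafSum_pos l hl).le
    have hb := (leafSum_pos r hr).le
    show Real.sqrt βL * G l + Real.sqrt βR * G r = Real.sqrt (l.leafSum + r.leafSum)
    rw [G_eq_sqrt l hl hpl, G_eq_sqrt r hr hpr, hβL, hβR,
      Real.sqrt_div ha, Real.sqrt_div hb, div_mul_eq_mul_div, div_mul_eq_mul_div,
      Real.mul_self_sqrt ha, Real.mul_self_sqrt hb, ← add_div, Real.div_sqrt]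

lemma admissible_of_prop : ∀ T : WTree, T.leavesPos → T.proportionalWeights → T.admissible
  | leaf _, _, _ => trivial
  | node βL βR l r, ⟨hl, hr⟩, ⟨hβL, hβR, hpl, hpr⟩ => by
    have ha := (leafSum_pos l hl).le
    have hb := (leafSum_pos r hr).le
    have hS : 0 < l.leafSum + r.leafSum := add_pos (leafSum_pos l hl) (leafSum_pos r hr)
    refine ⟨?_, ?_, ?_, admissible_of_prop l hl hpl, admissible_of_prop r hr hpr⟩
    · rw [hβL]; exact div_nonneg ha hS.le
    · rw [hβR]; exact div_nonneg hb hS.le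
    · rw [hβL, hβR]; field_simp

end WTree

/-- Attainment direction of Proposition 1: the proportional splitting amplitudes of
Eq. (17) are admissible and make the received power equal to the sum of the maximum
channel power gains of all selected paths. -/
theorem tree_power_attained (T : WTree)
    (hleaves : T.leavesPos) (hprop : T.proportionalWeights) :
    T.admissible ∧ (T.G) ^ 2 = T.leafSum := by
  refine ⟨WTree.admissible_of_prop T hleaves hprop, ?_⟩
  rw [WTree.G_eq_sqrt T hleaves hprop, Real.sq_sqrt (WTree.leafSum_pos T hleaves).le]
end

section
/- (Proposition 1, full form.) Let Q ≥ 1 and let T_1,…,T_Q be weighted full binary trees with strictly positive leaf values. Then: (i) for any admissible weights on each T_q and any nonnegative α_1,…,α_Q with ∑_q α_q = 1, one has (∑_{q=1}^{Q} √(α_q) · G(T_q))² ≤ ∑_{q=1}^{Q} leafSum(T_q); and (ii) there exist admissible weights on each T_q and a power allocation α in the simplex for which (∑_{q=1}^{Q} √(α_q) · G(T_q))² = ∑_{q=1}^{Q} leafSum(T_q). Hence the maximum received signal power equals the sum of the maximum channel power gains over all selected paths, as if they were node-disjoint. -/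
open Finset

namespace WTree

/-- Two trees have the same shape and the same leaf values (only internal-node
weights may differ). -/
def sameShape : WTree → WTree → Prop
  | leaf F, leaf F' => F = F'
  | node _ _ l r, node _ _ l' r' => sameShape l l' ∧ sameShape r r'
  | _, _ => False

end WTree


namespace WTree

lemma leavesPos.nonneg : ∀ {t : WTree}, t.leavesPos → t.leavesNonneg
  | leaf _, h => h.le
  | node _ _ _ _, h => ⟨h.1.nonneg, h.2.nonneg⟩

lemma sq_G_le : ∀ (t : WTree), t.leavesNonneg → t.admissible → t.G ^ 2 ≤ t.leafSum
  | leaf F, h, _ => by simp [G, leafSum, Real.sq_sqrt h]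
  | node βL βR l r, h, ha => by
    have hl := sq_G_le l h.1 ha.2.2.2.1
    have hr := sq_G_le r h.2 ha.2.2.2.2
    have hβL : Real.sqrt βL ^ 2 = βL := Real.sq_sqrt ha.1
    have hβR : Real.sqrt βR ^ 2 = βR := Real.sq_sqrt ha.2.1
    have hsum : βL + βR = 1 := ha.2.2.1
    simp only [G, leafSum]
    nlinarith [sq_nonneg (Real.sqrt βL * r.G - Real.sqrt βR * l.G),
      Real.sqrt_nonneg βL, Real.sqrt_nonneg βR, sq_nonneg l.G, sq_nonneg r.G]

lemma leafSum_pos_s9 : ∀ (t : WTree), t.leavesPos → 0 < t.leafSum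
  | leaf _, h => h
  | node _ _ l r, h => add_pos (leafSum_pos_s9 l h.1) (leafSum_pos_s9 r h.2)

/-- The optimal weight assignment. -/
noncomputable def opt : WTree → WTree
  | leaf F => leaf F
  | node _ _ l r => node (l.leafSum / (l.leafSum + r.leafSum))
      (r.leafSum / (l.leafSum + r.leafSum)) (opt l) (opt r)

lemma sameShape_opt : ∀ (t : WTree), t.sameShape t.opt
  | leaf _ => rfl
  | node _ _ l r => ⟨sameShape_opt l, sameShape_opt r⟩

lemma leafSum_opt : ∀ (t : WTree), t.opt.leafSum = t.leafSum
  | leaf _ => rfl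
  | node _ _ l r => by simp [opt, leafSum, leafSum_opt l, leafSum_opt r]

lemma admissible_opt : ∀ (t : WTree), t.leavesPos → t.opt.admissible
  | leaf _, _ => trivial
  | node _ _ l r, h => by
    have hl := leafSum_pos_s9 l h.1
    have hr := leafSum_pos_s9 r h.2
    have hs : 0 < l.leafSum + r.leafSum := add_pos hl hr
    exact ⟨div_nonneg hl.le hs.le, div_nonneg hr.le hs.le,
      by field_simp, admissible_opt l h.1, admissible_opt r h.2⟩

lemma G_opt : ∀ (t : WTree), t.leavesPos → t.opt.G = Real.sqrt t.leafSum
  | leaf _, _ => rfl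
  | node _ _ l r, h => by
    have hl := leafSum_pos_s9 l h.1
    have hr := leafSum_pos_s9 r h.2
    have hs : 0 < l.leafSum + r.leafSum := add_pos hl hr
    simp only [opt, G, leafSum, G_opt l h.1, G_opt r h.2]
    rw [Real.sqrt_div hl.le, Real.sqrt_div hr.le]
    have hS0 : 0 < Real.sqrt (l.leafSum + r.leafSum) := Real.sqrt_pos.2 hs
    field_simp
    rw [Real.sq_sqrt hl.le, Real.sq_sqrt hr.le, Real.sq_sqrt hs.le]

end WTree

/-- Proposition 1 (full form): (i) for any admissible weights and any power allocation
`α` in the simplex, the received signal power is at most the sum of the maximum channel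
power gains of all selected paths; (ii) some admissible weight assignment (on trees of
the same shape) together with some power allocation attains this bound with equality. -/
theorem proposition_one (Q : ℕ) (hQ : 1 ≤ Q) (T : Fin Q → WTree)
    (hpos : ∀ q, (T q).leavesPos) :
    ((∀ q, (T q).admissible) → ∀ α : Fin Q → ℝ, (∀ q, 0 ≤ α q) → ∑ q, α q = 1 →
      (∑ q, Real.sqrt (α q) * (T q).G) ^ 2 ≤ ∑ q, (T q).leafSum) ∧
    (∃ (T' : Fin Q → WTree) (α : Fin Q → ℝ),
      (∀ q, (T q).sameShape (T' q)) ∧ (∀ q, (T' q).admissible) ∧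
      (∀ q, 0 ≤ α q) ∧ ∑ q, α q = 1 ∧
      (∑ q, Real.sqrt (α q) * (T' q).G) ^ 2 = ∑ q, (T q).leafSum) := by
  constructor
  · intro hadm α hα hαs
    have key := Finset.sum_mul_sq_le_sq_mul_sq Finset.univ
      (fun q => Real.sqrt (α q)) (fun q => (T q).G)
    have h1 : ∑ q, Real.sqrt (α q) ^ 2 = 1 := by
      rw [← hαs]; exact Finset.sum_congr rfl fun q _ => Real.sq_sqrt (hα q)
    have h2 : ∑ q, (T q).G ^ 2 ≤ ∑ q, (T q).leafSum :=
      Finset.sum_le_sum fun q _ => WTree.sq_G_le _ (hpos q).nonneg (hadm q)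
    calc (∑ q, Real.sqrt (α q) * (T q).G) ^ 2
        ≤ (∑ q, Real.sqrt (α q) ^ 2) * (∑ q, (T q).G ^ 2) := key
      _ = ∑ q, (T q).G ^ 2 := by rw [h1, one_mul]
      _ ≤ ∑ q, (T q).leafSum := h2
  · have hSq : ∀ q, 0 < (T q).leafSum := fun q => WTree.leafSum_pos_s9 _ (hpos q)
    have hS : 0 < ∑ q, (T q).leafSum :=
      Finset.sum_pos (fun q _ => hSq q) (Finset.univ_nonempty_iff.2 ⟨⟨0, hQ⟩⟩)
    refine ⟨fun q => (T q).opt, fun q => (T q).leafSum / ∑ q, (T q).leafSum,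
      fun q => WTree.sameShape_opt _, fun q => WTree.admissible_opt _ (hpos q),
      fun q => div_nonneg (hSq q).le hS.le, ?_, ?_⟩
    · rw [← Finset.sum_div]; field_simp
    · have : ∀ q, Real.sqrt ((T q).leafSum / ∑ q, (T q).leafSum) * ((T q).opt).G
          = (T q).leafSum / Real.sqrt (∑ q, (T q).leafSum) := by
        intro q
        rw [WTree.G_opt _ (hpos q), Real.sqrt_div (hSq q).le, div_mul_eq_mul_div,
          Real.mul_self_sqrt (hSq q).le]
      rw [Finset.sum_congr rfl fun q _ => this q, ← Finset.sum_div, div_pow,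
        Real.sq_sqrt hS.le, pow_two, mul_div_assoc, div_self hS.ne', mul_one]
end
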